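/- arXiv:2211.04357 — 10 statements merged into one kernel-verified Lean document; each statement's English description precedes it below -/
import Mathlib

section
/- Two vertices u and v of a finite simple graph G belong to exactly the same maximal independent sets of G if and only if they are twins, i.e., N(u) = N(v) (open neighbourhoods). -/
open SimpleGraph

/-- `s` is an independent set in `G`. -/
def IsIndep {V : Type*} (G : SimpleGraph V) (s : Set V) : Prop :=
  ∀ ⦃u⦄, u ∈ s → ∀ ⦃v⦄, v ∈ s → ¬ G.Adj u v

/-- `s` is a maximal independent set in `G`. -/
def IsMaxIndep {V : Type*} (G : SimpleGraph V) (s : Set V) : Prop :=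
  IsIndep G s ∧ ∀ t : Set V, IsIndep G t → s ⊆ t → s = t

/-- The number of maximal independent sets of `G`. -/
noncomputable def imax {V : Type*} (G : SimpleGraph V) : ℕ :=
  Set.ncard {s : Set V | IsMaxIndep G s}

/-- `G` is twin-free: no two distinct vertices have the same open neighbourhood. -/
def TwinFree {V : Type*} (G : SimpleGraph V) : Prop :=
  ∀ u v : V, G.neighborSet u = G.neighborSet v → u = v

lemma exists_maxIndep_superset {V : Type*} (G : SimpleGraph V) {s : Set V}
    (hs : IsIndep G s) : ∃ t, IsMaxIndep G t ∧ s ⊆ t := by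
  obtain ⟨m, hsm, hm⟩ := zorn_subset_nonempty {t : Set V | IsIndep G t}
    (fun c hc hchain hne => by
      refine ⟨⋃₀ c, ?_, fun t ht => Set.subset_sUnion_of_mem ht⟩
      intro a ha b hb hab
      obtain ⟨ta, hta, hat⟩ := ha
      obtain ⟨tb, htb, hbt⟩ := hb
      rcases hchain.total hta htb with h | h
      · exact hc htb (h hat) hbt hab
      · exact hc hta hat (h hbt) hab) s hs
  exact ⟨m, ⟨hm.prop, fun t ht hmt => hm.eq_of_le ht hmt⟩, hsm⟩

theorem stmt_0 {V : Type*} [Fintype V] (G : SimpleGraph V) (u v : V) :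
    (∀ s : Set V, IsMaxIndep G s → (u ∈ s ↔ v ∈ s)) ↔
      G.neighborSet u = G.neighborSet v := by
  constructor
  · intro h
    have key : ∀ a b : V, (∀ s : Set V, IsMaxIndep G s → (a ∈ s ↔ b ∈ s)) →
        ∀ w, G.Adj a w → G.Adj b w := by
      intro a b hab w haw
      by_contra hbw
      have hind : IsIndep G {b, w} := by
        intro x hx y hy hxy
        rcases hx with rfl | rfl <;> rcases hy with rfl | rfl
        · exact G.irrefl hxy
        · exact hbw hxy
        · exact hbw hxy.symm
        · exact G.irrefl hxy
      obtain ⟨t, ht, hsub⟩ := exists_maxIndep_superset G hind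
      have hb : b ∈ t := hsub (by simp)
      have hw : w ∈ t := hsub (by simp)
      have ha : a ∈ t := (hab t ht).2 hb
      exact ht.1 ha hw haw
    ext w
    exact ⟨key u v h w, key v u (fun s hs => (h s hs).symm) w⟩
  · intro hN s hs
    have key : ∀ a b : V, G.neighborSet a = G.neighborSet b → a ∈ s → b ∈ s := by
      intro a b hab haS
      by_contra hbS
      have hind : IsIndep G (insert b s) := by
        intro x hx y hy hxy
        rcases hx with rfl | hx <;> rcases hy with rfl | hy
        · exact G.irrefl hxy
        · have : y ∈ G.neighborSet a := hab ▸ hxy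
          exact hs.1 haS hy this
        · have : x ∈ G.neighborSet a := hab ▸ hxy.symm
          exact hs.1 hx haS this.symm
        · exact hs.1 hx hy hxy
      have := hs.2 _ hind (Set.subset_insert b s)
      exact hbS (this ▸ Set.mem_insert b s)
    exact ⟨key u v hN, key v u hN.symm⟩
end

section
/- If G is a connected twin-free graph on n vertices with at least one edge, then imax(G) > log_2(n), where imax(G) is the number of maximal independent sets of G. -/
/-! Send each vertex `v` to the family of maximal independent sets containing it. This family is
nonempty, and if every maximal independent set through `v` also contains `u`, then
`N(u) ⊆ N(v)`: a neighbour `w` of `u` outside `N(v)` would give an independent set `{v, w}`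
extending to a maximal one that avoids `u`. In a twin-free graph the vertices therefore inject
into the nonempty subfamilies of the `imax G` maximal independent sets, so `n < 2 ^ imax G`. -/

open SimpleGraph

section MaxIndep

variable {V : Type*} (G : SimpleGraph V)

lemma isIndep_pair {u v : V} (h : ¬ G.Adj u v) : IsIndep G {u, v} := by
  rintro a (rfl | rfl) b (rfl | rfl) hab
  exacts [G.irrefl hab, h hab, h hab.symm, G.irrefl hab]

variable {G} [Finite V]

lemma IsIndep.exists_isMaxIndep_superset {s : Set V} (hs : IsIndep G s) :
    ∃ t, IsMaxIndep G t ∧ s ⊆ t := by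
  obtain ⟨t, ⟨ht, hst⟩, hmax⟩ :=
    Set.Finite.exists_maximalFor id {t | IsIndep G t ∧ s ⊆ t} (Set.toFinite _) ⟨s, hs, subset_rfl⟩
  exact ⟨t, ⟨ht, fun t' ht' htt' => htt'.antisymm (hmax ⟨ht', hst.trans htt'⟩ htt')⟩, hst⟩

variable (G)

lemma imax_pos : 0 < imax G := by
  obtain ⟨t, ht, -⟩ := IsIndep.exists_isMaxIndep_superset (G := G) (s := ∅) (by simp [IsIndep])
  exact (Set.ncard_pos (Set.toFinite _)).mpr ⟨t, ht⟩

def maxIndepSetsThrough (v : V) : Set {s : Set V | IsMaxIndep G s} :=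
  {S | v ∈ S.1}

lemma maxIndepSetsThrough_nonempty (v : V) : (maxIndepSetsThrough G v).Nonempty := by
  obtain ⟨t, ht, hvt⟩ := (isIndep_pair G (G.irrefl (v := v))).exists_isMaxIndep_superset
  exact ⟨⟨t, ht⟩, hvt (by simp)⟩

variable {G}

lemma neighborSet_subset_of_maxIndepSetsThrough_subset {u v : V}
    (h : maxIndepSetsThrough G v ⊆ maxIndepSetsThrough G u) :
    G.neighborSet u ⊆ G.neighborSet v := by
  intro w huw
  by_contra hvw
  obtain ⟨S, hS, hvwS⟩ := (isIndep_pair G hvw).exists_isMaxIndep_superset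
  have huS : u ∈ S := h (show ⟨S, hS⟩ ∈ maxIndepSetsThrough G v from hvwS (by simp))
  exact hS.1 huS (hvwS (by simp)) huw

lemma TwinFree.maxIndepSetsThrough_injective (htf : TwinFree G) :
    Function.Injective (maxIndepSetsThrough G) := fun u v huv =>
  htf u v ((neighborSet_subset_of_maxIndepSetsThrough_subset huv.ge).antisymm
    (neighborSet_subset_of_maxIndepSetsThrough_subset huv.le))

end MaxIndep

lemma Nat.card_lt_two_pow_of_injective {α β : Type*} [Finite β] (f : α → Set β)
    (hf : Function.Injective f) (hne : ∀ a, (f a).Nonempty) : Nat.card α < 2 ^ Nat.card β := by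
  classical
  have : Finite α := Finite.of_injective f hf
  have := Fintype.ofFinite α
  have := Fintype.ofFinite β
  rw [Nat.card_eq_fintype_card, Nat.card_eq_fintype_card, ← Fintype.card_set]
  exact Fintype.card_lt_of_injective_of_notMem f hf (b := ∅) fun ⟨a, ha⟩ => (hne a).ne_empty ha

lemma Real.logb_two_lt_of_lt_two_pow {n k : ℕ} (hk : 0 < k) (h : n < 2 ^ k) :
    Real.logb 2 n < k := by
  rcases n.eq_zero_or_pos with rfl | hn
  · simpa using hk
  rw [Real.logb_lt_iff_lt_rpow one_lt_two (by exact_mod_cast hn), Real.rpow_natCast]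
  exact_mod_cast h

theorem stmt_1_general {V : Type*} [Fintype V] (G : SimpleGraph V)
    (htf : TwinFree G) :
    Real.logb 2 (Fintype.card V) < (imax G : ℝ) := by
  have hcard : Fintype.card V < 2 ^ imax G := by
    simpa only [Nat.card_eq_fintype_card, imax, Nat.card_coe_set_eq] using
      Nat.card_lt_two_pow_of_injective _ htf.maxIndepSetsThrough_injective
        (maxIndepSetsThrough_nonempty G)
  exact Real.logb_two_lt_of_lt_two_pow (imax_pos G) hcard

theorem stmt_1 {V : Type*} [Fintype V] (G : SimpleGraph V)
    (hconn : G.Connected) (htf : TwinFree G) (hedge : ∃ u v : V, G.Adj u v) :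
    Real.logb 2 (Fintype.card V) < (imax G : ℝ) :=
  stmt_1_general G htf
end

section
/- For every integer k ≥ 2 there exists a connected twin-free graph G on n = 2^{k-1} + k - 2 vertices with imax(G) = k. Specifically, the graph obtained from a clique K_{k-1} by adding, for each non-empty subset S of the clique's vertices, a new vertex whose neighbourhood is exactly S, has exactly k maximal independent sets. -/
open SimpleGraph

/-- The graph obtained from a clique `K_k` (on `Fin k`) by adding, for every nonempty
vertex subset `S` of the clique, a new vertex whose neighbourhood is exactly `S`. -/
def cliqueWithSubsetVertices (k : ℕ) :
    SimpleGraph (Fin k ⊕ {S : Finset (Fin k) // S.Nonempty}) :=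
  SimpleGraph.fromRel (fun u v =>
    match u, v with
    | Sum.inl _, Sum.inl _ => True
    | Sum.inl i, Sum.inr S => i ∈ S.1
    | Sum.inr S, Sum.inl i => i ∈ S.1
    | Sum.inr _, Sum.inr _ => False)

namespace CWSAux

variable {m : ℕ}

lemma adj_ll {i j : Fin m} : (cliqueWithSubsetVertices m).Adj (.inl i) (.inl j) ↔ i ≠ j := by
  simp [cliqueWithSubsetVertices, SimpleGraph.fromRel_adj]
lemma adj_lr {i : Fin m} {S} : (cliqueWithSubsetVertices m).Adj (.inl i) (.inr S) ↔ i ∈ S.1 := by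
  simp [cliqueWithSubsetVertices, SimpleGraph.fromRel_adj]
lemma adj_rl {i : Fin m} {S} : (cliqueWithSubsetVertices m).Adj (.inr S) (.inl i) ↔ i ∈ S.1 := by
  simp [cliqueWithSubsetVertices, SimpleGraph.fromRel_adj]
lemma adj_rr {S T} : ¬ (cliqueWithSubsetVertices m).Adj (.inr S) (.inr T) := by
  simp [cliqueWithSubsetVertices, SimpleGraph.fromRel_adj]

/-- the candidate maximal independent sets -/
def f (m : ℕ) : Option (Fin m) → Set (Fin m ⊕ {S : Finset (Fin m) // S.Nonempty})
  | none => Set.range Sum.inr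
  | some i => {v | v = Sum.inl i ∨ ∃ S, i ∉ S.1 ∧ v = Sum.inr S}

lemma indep_none : IsIndep (cliqueWithSubsetVertices m) (f m none) := by
  rintro u ⟨S, rfl⟩ v ⟨T, rfl⟩
  exact adj_rr

lemma indep_some (i : Fin m) : IsIndep (cliqueWithSubsetVertices m) (f m (some i)) := by
  rintro u (rfl | ⟨S, hS, rfl⟩) v (rfl | ⟨T, hT, rfl⟩)
  · exact fun h => (cliqueWithSubsetVertices m).irrefl h
  · rw [adj_lr]; exact hT
  · rw [adj_rl]; exact hS
  · exact adj_rr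

lemma max_none : IsMaxIndep (cliqueWithSubsetVertices m) (f m none) := by
  refine ⟨indep_none, fun t ht hsub => Set.Subset.antisymm hsub ?_⟩
  rintro (i | S) hv
  · exact absurd (adj_lr.mpr (Finset.mem_singleton_self i))
      (ht hv (hsub ⟨⟨{i}, Finset.singleton_nonempty i⟩, rfl⟩))
  · exact ⟨S, rfl⟩

lemma max_some (i : Fin m) : IsMaxIndep (cliqueWithSubsetVertices m) (f m (some i)) := by
  refine ⟨indep_some i, fun t ht hsub => Set.Subset.antisymm hsub ?_⟩
  have hi : Sum.inl i ∈ t := hsub (Or.inl rfl)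
  rintro (j | S) hv
  · rcases eq_or_ne j i with rfl | hne
    · exact Or.inl rfl
    · exact absurd (adj_ll.mpr hne.symm) (ht hi hv)
  · by_cases hS : i ∈ S.1
    · exact absurd (adj_lr.mpr hS) (ht hi hv)
    · exact Or.inr ⟨S, hS, rfl⟩

lemma max_eq_range :
    {s | IsMaxIndep (cliqueWithSubsetVertices m) s} = Set.range (f m) := by
  ext s
  constructor
  · rintro ⟨hind, hmax⟩
    by_cases hl : ∃ i : Fin m, Sum.inl i ∈ s
    · obtain ⟨i, hi⟩ := hl
      refine ⟨some i, (hmax _ (indep_some i) ?_).symm⟩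
      rintro (j | S) hv
      · rcases eq_or_ne j i with rfl | hne
        · exact Or.inl rfl
        · exact absurd (adj_ll.mpr hne) (hind hv hi)
      · by_cases hS : i ∈ S.1
        · exact absurd (adj_rl.mpr hS) (hind hv hi)
        · exact Or.inr ⟨S, hS, rfl⟩
    · refine ⟨none, (hmax _ indep_none ?_).symm⟩
      rintro (j | S) hv
      · exact absurd ⟨j, hv⟩ hl
      · exact ⟨S, rfl⟩
  · rintro ⟨o, rfl⟩
    cases o with
    | none => exact max_none
    | some i => exact max_some i

lemma f_inj : Function.Injective (f m) := by
  intro a b hab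
  match a, b with
  | none, none => rfl
  | some i, some j =>
    have : Sum.inl i ∈ f m (some j) := hab ▸ Or.inl rfl
    rcases this with h | ⟨S, _, h⟩
    · simp_all
    · simp at h
  | none, some j =>
    have : Sum.inl j ∈ f m none := hab ▸ Or.inl rfl
    obtain ⟨S, h⟩ := this
    simp at h
  | some i, none =>
    have : Sum.inl i ∈ f m none := hab ▸ Or.inl rfl
    obtain ⟨S, h⟩ := this
    simp at h

end CWSAux

open CWSAux in
theorem stmt_3 (k : ℕ) (hk : 2 ≤ k) :
    (cliqueWithSubsetVertices (k - 1)).Connected ∧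
    TwinFree (cliqueWithSubsetVertices (k - 1)) ∧
    Fintype.card (Fin (k - 1) ⊕ {S : Finset (Fin (k - 1)) // S.Nonempty}) =
      2 ^ (k - 1) + k - 2 ∧
    imax (cliqueWithSubsetVertices (k - 1)) = k := by
  set m := k - 1 with hm
  have hm1 : 1 ≤ m := by omega
  have h0 : (0 : ℕ) < m := hm1
  let z : Fin m := ⟨0, h0⟩
  refine ⟨?_, ?_, ?_, ?_⟩
  · -- Connected
    rw [SimpleGraph.connected_iff]
    refine ⟨?_, ⟨Sum.inl z⟩⟩
    · intro u v
      have key : ∀ w : Fin m ⊕ {S : Finset (Fin m) // S.Nonempty},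
          (cliqueWithSubsetVertices m).Reachable w (Sum.inl z) := by
        rintro (i | S)
        · rcases eq_or_ne i z with rfl | hne
          · exact Reachable.refl _
          · exact (adj_ll.mpr hne).reachable
        · obtain ⟨i, hi⟩ := S.2
          have h1 : (cliqueWithSubsetVertices m).Reachable (Sum.inr S) (Sum.inl i) :=
            (adj_rl.mpr hi).reachable
          rcases eq_or_ne i z with rfl | hne
          · exact h1
          · exact h1.trans (adj_ll.mpr hne).reachable
      exact (key u).trans (key v).symm
  · -- TwinFree
    rintro (i | S) (j | T) h
    · have hmem : Sum.inr ⟨{i}, Finset.singleton_nonempty i⟩ ∈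
          (cliqueWithSubsetVertices m).neighborSet (Sum.inl i) :=
        adj_lr.mpr (Finset.mem_singleton_self i)
      rw [h] at hmem
      have := adj_lr.mp hmem
      simp at this
      rw [this]
    · have hmem : Sum.inr ⟨{i}, Finset.singleton_nonempty i⟩ ∈
          (cliqueWithSubsetVertices m).neighborSet (Sum.inl i) :=
        adj_lr.mpr (Finset.mem_singleton_self i)
      rw [h] at hmem
      exact absurd hmem adj_rr
    · have hmem : Sum.inr ⟨{j}, Finset.singleton_nonempty j⟩ ∈
          (cliqueWithSubsetVertices m).neighborSet (Sum.inl j) :=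
        adj_lr.mpr (Finset.mem_singleton_self j)
      rw [← h] at hmem
      exact absurd hmem adj_rr
    · have heq : S.1 = T.1 := by
        ext x
        have h' := Set.ext_iff.mp h (Sum.inl x)
        simpa only [SimpleGraph.mem_neighborSet, adj_rl] using h'
      congr 1
      exact Subtype.ext heq
  · -- cardinality
    have h1 : Fintype.card {S : Finset (Fin m) // S.Nonempty} = 2 ^ m - 1 := by
      have : Fintype.card {S : Finset (Fin m) // S.Nonempty} =
          Fintype.card {S : Finset (Fin m) // ¬ S = ∅} := by
        apply Fintype.card_congr
        exact Equiv.subtypeEquivRight (fun S => by simp [Finset.nonempty_iff_ne_empty])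
      rw [this, Fintype.card_subtype_compl]
      simp [Fintype.card_subtype_eq (∅ : Finset (Fin m))]
    rw [Fintype.card_sum, h1, Fintype.card_fin]
    have : 1 ≤ 2 ^ m := Nat.one_le_two_pow
    omega
  · -- imax
    rw [imax, max_eq_range, ← Set.image_univ, Set.ncard_image_of_injective _ f_inj,
      Set.ncard_univ]
    simp only [Nat.card_eq_fintype_card, Fintype.card_option, Fintype.card_fin]
    omega
end

section
/- Let n ≥ 3 and let F ⊆ 2^{[n]} be a union-efficient family, i.e., for every subfamily {A_1,...,A_m} of F whose union equals [n], there exist indices i, j with A_i ∪ A_j = [n]. Then |F| ≤ 2^{n-1} + n. -/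
/-!
Let `P` be the sets `A ∈ F` with `Aᶜ ∈ F`. Counting `F` together with its complements inside
`2^[n]` gives `2|F| ≤ 2^n + |P|`, so it suffices to show `|P| ≤ 2n`.

Union-efficiency of `F` says exactly that the family of complements of members of `F` has the
Helly property: a pairwise intersecting subfamily has a common point. `P` is closed under
complement, so it is enough to bound the members of `P` through a fixed point `x` by `n`.
Given such members `G ≠ [n]` all containing a nonempty set `Y`, remove a minimal `C ∈ G`; then
`Cᶜ` together with the rest of `G` is pairwise intersecting, so has a common point `y ∉ C`, and
`y` can be added to `Y`. Each removal enlarges `Y`, hence `|G| + |Y| ≤ n`.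
-/

open Finset

/-- A family `F` of subsets of `[n]` is union-efficient if whenever the union of a
subfamily equals `[n]`, two of its members already have union `[n]`. -/
def UnionEfficient {n : ℕ} (F : Finset (Finset (Fin n))) : Prop :=
  ∀ S : Finset (Finset (Fin n)), S ⊆ F → S.sup id = Finset.univ →
    ∃ A ∈ S, ∃ B ∈ S, A ∪ B = Finset.univ

section Helly

variable {α : Type*} [DecidableEq α]

def HasHellyProperty (H : Finset (Finset α)) : Prop :=
  ∀ S ⊆ H, (S : Set (Finset α)).Intersecting → ∃ y, ∀ A ∈ S, y ∈ A

theorem HasHellyProperty.mono {H K : Finset (Finset α)} (hH : HasHellyProperty H)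
    (hKH : K ⊆ H) : HasHellyProperty K :=
  fun S hSK hS => hH S (hSK.trans hKH) hS

variable [Fintype α]

theorem two_mul_card_le_two_pow_add_card_filter_compl_mem (F : Finset (Finset α)) :
    2 * #F ≤ 2 ^ Fintype.card α + #(F.filter fun A => Aᶜ ∈ F) := by
  have hinter : F ∩ F.image compl = F.filter fun A => Aᶜ ∈ F := by
    ext A
    simp only [mem_inter, mem_image, mem_filter, compl_eq_comm, exists_eq_right']
  have hunion : #(F ∪ F.image compl) ≤ 2 ^ Fintype.card α := by
    simpa [Fintype.card_finset] using card_le_univ (F ∪ F.image compl)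
  have hcount := card_union_add_card_inter F (F.image compl)
  rw [hinter, card_image_of_injective F compl_injective] at hcount
  omega

theorem card_add_card_le_of_hasHellyProperty {H : Finset (Finset α)} (hH : HasHellyProperty H)
    (G : Finset (Finset α)) (hGH : G ⊆ H) (hcompl : ∀ C ∈ G, Cᶜ ∈ H) (huniv : univ ∉ G)
    {Y : Finset α} (hY : Y.Nonempty) (hYG : ∀ C ∈ G, Y ⊆ C) :
    #G + #Y ≤ Fintype.card α := by
  induction G using Finset.strongInduction generalizing Y with
  | H G ih =>
    obtain rfl | hG := G.eq_empty_or_nonempty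
    · simpa using card_le_univ Y
    obtain ⟨C, hCG, hCmin⟩ := exists_minimal hG
    have hCuniv : C ≠ univ := ne_of_mem_of_not_mem hCG huniv
    have hS : (insert Cᶜ (G.erase C) : Set (Finset α)).Intersecting := by
      refine Set.intersecting_insert.2 ⟨?_, by simpa using hCuniv, ?_⟩
      · intro A hA B hB
        obtain ⟨y, hy⟩ := hY
        exact not_disjoint_iff.2 ⟨y, hYG A (mem_of_mem_erase hA) hy,
          hYG B (mem_of_mem_erase hB) hy⟩
      · intro D hD hdisj
        have hDC : D ⊆ C := disjoint_compl_left_iff.1 hdisj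
        exact ne_of_mem_erase hD (le_antisymm hDC (hCmin (mem_of_mem_erase hD) hDC))
    obtain ⟨y, hy⟩ := hH _ (insert_subset (hcompl C hCG) ((erase_subset C G).trans hGH))
      (by simpa using hS)
    have hyC : y ∉ C := mem_compl.1 (hy _ (mem_insert_self _ _))
    have hyY : y ∉ Y := fun h => hyC (hYG C hCG h)
    have hrest := ih (G.erase C) (erase_ssubset hCG) ((erase_subset C G).trans hGH)
      (fun D hD => hcompl D (mem_of_mem_erase hD)) (fun h => huniv (mem_of_mem_erase h))
      (insert_nonempty y Y)
      (fun D hD => insert_subset (hy D (mem_insert_of_mem hD)) (hYG D (mem_of_mem_erase hD)))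
    rw [card_erase_of_mem hCG, card_insert_of_notMem hyY] at hrest
    have hGpos := card_pos.2 hG
    omega

theorem card_le_two_mul_of_hasHellyProperty [Nonempty α] {H : Finset (Finset α)}
    (hH : HasHellyProperty H) (hcompl : ∀ C ∈ H, Cᶜ ∈ H) : #H ≤ 2 * Fintype.card α := by
  obtain ⟨x⟩ := ‹Nonempty α›
  have hx : #((H.filter (x ∈ ·)).erase univ) + 1 ≤ Fintype.card α := by
    simpa using card_add_card_le_of_hasHellyProperty hH _
      ((erase_subset _ _).trans (filter_subset _ _))
      (fun C hC => hcompl C (filter_subset _ _ (mem_of_mem_erase hC))) (notMem_erase _ _)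
      (singleton_nonempty x)
      (fun C hC => singleton_subset_iff.2 (mem_filter.1 (mem_of_mem_erase hC)).2)
  have hnotx : #(H.filter (x ∉ ·)) ≤ #(H.filter (x ∈ ·)) := by
    refine card_le_card_of_injOn compl (fun C hC => ?_) compl_injective.injOn
    obtain ⟨hCH, hxC⟩ := mem_filter.1 hC
    exact mem_filter.2 ⟨hcompl C hCH, mem_compl.2 hxC⟩
  have hsplit := card_filter_add_card_filter_not (s := H) (x ∈ ·)
  have herase := pred_card_le_card_erase (s := H.filter (x ∈ ·)) (a := univ)
  omega

end Helly

theorem UnionEfficient.hasHellyProperty_image_compl {n : ℕ} {F : Finset (Finset (Fin n))}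
    (hF : UnionEfficient F) : HasHellyProperty (F.image compl) := by
  intro S hSF hS
  by_contra! hno
  obtain ⟨A, hA, B, hB, hAB⟩ := hF (S.image compl)
    (fun A hA => by
      obtain ⟨C, hC, rfl⟩ := mem_image.1 hA
      obtain ⟨D, hD, rfl⟩ := mem_image.1 (hSF hC)
      simpa using hD)
    (eq_univ_of_forall fun y => by
      obtain ⟨C, hC, hyC⟩ := hno y
      exact mem_sup.2 ⟨Cᶜ, mem_image_of_mem _ hC, mem_compl.2 hyC⟩)
  obtain ⟨C, hC, rfl⟩ := mem_image.1 hA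
  obtain ⟨D, hD, rfl⟩ := mem_image.1 hB
  rw [← compl_inter, compl_eq_univ_iff] at hAB
  exact hS hC hD (disjoint_iff_inter_eq_empty.2 hAB)

theorem stmt_6 (n : ℕ) (hn : 3 ≤ n) (F : Finset (Finset (Fin n)))
    (hF : UnionEfficient F) :
    F.card ≤ 2 ^ (n - 1) + n := by
  have : Nonempty (Fin n) := ⟨⟨0, by omega⟩⟩
  have hP : #(F.filter fun A => Aᶜ ∈ F) ≤ 2 * n := by
    simpa using card_le_two_mul_of_hasHellyProperty
      (hF.hasHellyProperty_image_compl.mono fun A hA =>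
        mem_image.2 ⟨Aᶜ, (mem_filter.1 hA).2, compl_compl A⟩)
      (fun A hA => by simpa using (mem_filter.1 hA).symm)
  have hF2 := two_mul_card_le_two_pow_add_card_filter_compl_mem F
  rw [Fintype.card_fin] at hF2
  have hpow : 2 ^ n = 2 ^ (n - 1) * 2 := by rw [← pow_succ, Nat.sub_add_cancel (by omega)]
  omega
end

section
/- Let G be a twin-free bipartite graph without isolated vertices whose bipartition classes A and B have sizes a ≤ b. Then imax(G) ≥ b + 1. -/
open SimpleGraph

theorem stmt_7 {V : Type*} [Fintype V] (G : SimpleGraph V) (A B : Finset V)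
    (hpart : ∀ v : V, (v ∈ A ∧ v ∉ B) ∨ (v ∈ B ∧ v ∉ A))
    (hbip : ∀ u v : V, G.Adj u v → (u ∈ A ∧ v ∈ B) ∨ (u ∈ B ∧ v ∈ A))
    (hnoiso : ∀ v : V, ∃ u : V, G.Adj v u)
    (htf : TwinFree G)
    (hab : A.card ≤ B.card) :
    B.card + 1 ≤ imax G := by
  classical
  set M : V → Set V := fun v =>
    {w | (w ∈ B ∧ ∀ x, G.Adj w x → G.Adj v x) ∨ (w ∈ A ∧ ¬ G.Adj v w)} with hM
  have hAB : ∀ v : V, v ∈ B → v ∉ A := fun v hv =>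
    ((hpart v).resolve_left (fun h => h.2 hv)).2
  have hBA : ∀ v : V, v ∈ A → v ∉ B := fun v hv =>
    ((hpart v).resolve_right (fun h => h.2 hv)).2
  have hvM : ∀ v ∈ B, v ∈ M v := fun v hv => Or.inl ⟨hv, fun x hx => hx⟩
  -- each M v is independent
  have hindep : ∀ v, IsIndep G (M v) := by
    intro v u hu w hw hadj
    rcases hu with ⟨huB, hNu⟩ | ⟨huA, hnv⟩
    · rcases hw with ⟨hwB, _⟩ | ⟨hwA, hnvw⟩
      · rcases hbip u w hadj with ⟨h1, _⟩ | ⟨_, h2⟩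
        · exact hAB u huB h1
        · exact hAB w hwB h2
      · exact hnvw (hNu w hadj)
    · rcases hw with ⟨hwB, hNw⟩ | ⟨hwA, _⟩
      · exact hnv (hNw u hadj.symm)
      · rcases hbip u w hadj with ⟨_, h2⟩ | ⟨h1, _⟩
        · exact hBA w hwA h2
        · exact hBA u huA h1
  -- each M v (for v ∈ B) is maximal independent
  have hmax : ∀ v ∈ B, IsMaxIndep G (M v) := by
    intro v hv
    refine ⟨hindep v, fun t ht hsub => Set.Subset.antisymm hsub ?_⟩
    intro x hx
    rcases hpart x with ⟨hxA, _⟩ | ⟨hxB, _⟩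
    · exact Or.inr ⟨hxA, fun hadj => ht (hsub (hvM v hv)) hx hadj⟩
    · refine Or.inl ⟨hxB, fun y hy => ?_⟩
      by_contra hvy
      have hyA : y ∈ A := by
        rcases hbip x y hy with ⟨h1, _⟩ | ⟨_, h2⟩
        · exact absurd h1 (hAB x hxB)
        · exact h2
      have hyM : y ∈ M v := Or.inr ⟨hyA, hvy⟩
      exact ht hx (hsub hyM) hy
  -- M is injective on B
  have hinj : Set.InjOn M ↑B := by
    intro u hu w hw h
    have key : ∀ p q : V, p ∈ B → q ∈ B → M p = M q → ∀ y, G.Adj p y → G.Adj q y := by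
      intro p q hp hq hpq y hadj
      by_contra h2
      have hyA : y ∈ A := by
        rcases hbip p y hadj with ⟨h1, _⟩ | ⟨_, h3⟩
        · exact absurd h1 (hAB p hp)
        · exact h3
      have : y ∈ M p := hpq ▸ (Or.inr ⟨hyA, h2⟩ : y ∈ M q)
      rcases this with ⟨hyB, _⟩ | ⟨_, hn⟩
      · exact hAB y hyB hyA
      · exact hn hadj
    apply htf
    ext y
    simp only [mem_neighborSet]
    exact ⟨key u w hu hw h y, key w u hw hu h.symm y⟩
  -- A is maximal independent
  have hAmax : IsMaxIndep G ↑A := by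
    constructor
    · intro u hu w hw hadj
      rcases hbip u w hadj with ⟨_, h⟩ | ⟨h, _⟩
      · exact hBA w hw h
      · exact hBA u hu h
    · intro t ht hsub
      refine Set.Subset.antisymm hsub fun x hx => ?_
      rcases hpart x with ⟨hxA, _⟩ | ⟨hxB, _⟩
      · exact hxA
      · obtain ⟨u, hu⟩ := hnoiso x
        have huA : u ∈ A := by
          rcases hbip x u hu with ⟨h1, _⟩ | ⟨_, h2⟩
          · exact absurd h1 (hAB x hxB)
          · exact h2
        exact absurd hu (ht hx (hsub huA))
  -- assemble
  have hsubset : insert (↑A : Set V) (M '' ↑B) ⊆ {s : Set V | IsMaxIndep G s} := by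
    intro s hs
    rcases hs with rfl | ⟨v, hv, rfl⟩
    · exact hAmax
    · exact hmax v hv
  have hnotmem : (↑A : Set V) ∉ M '' ↑B := by
    rintro ⟨v, hv, hMv⟩
    have hv' : v ∈ B := hv
    have : v ∈ (↑A : Set V) := hMv ▸ hvM v hv'
    exact hAB v hv' this
  have hfin : (M '' ↑B).Finite := (B.finite_toSet).image M
  have hcard : (insert (↑A : Set V) (M '' ↑B)).ncard = B.card + 1 := by
    rw [Set.ncard_insert_of_notMem hnotmem hfin,
      Set.ncard_image_of_injOn hinj, Set.ncard_coe_finset]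
  calc B.card + 1 = (insert (↑A : Set V) (M '' ↑B)).ncard := hcard.symm
    _ ≤ imax G := Set.ncard_le_ncard hsubset (Set.toFinite _)
end

section
/- Define f(1)=1, f(2)=f(3)=2, and for n ≥ 4: f(n) = 4·3^{n/5 - 1} if n ≡ 0 (mod 5), 5·3^{(n-6)/5} if n ≡ 1, 2·3^{(n-2)/5} if n ≡ 2, 8·3^{(n-8)/5} if n ≡ 3, 3^{(n+1)/5} if n ≡ 4. Then f(n)·f(m) ≥ f(n+m) for all integers n, m ≥ 2 except for the pair (n,m) = (3,3). -/
/-- The extremal function for the minimum number of maximal independent sets of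
twin-free trees: `f 1 = 1`, `f 2 = f 3 = 2`, and for `n ≥ 4` the value depends on
the residue of `n` modulo `5`. -/
noncomputable def f (n : ℕ) : ℝ :=
  if n ≤ 1 then (n : ℝ)
  else if n ≤ 3 then 2
  else if n % 5 = 0 then 4 * (3 : ℝ) ^ ((n : ℝ) / 5 - 1)
  else if n % 5 = 1 then 5 * (3 : ℝ) ^ (((n : ℝ) - 6) / 5)
  else if n % 5 = 2 then 2 * (3 : ℝ) ^ (((n : ℝ) - 2) / 5)
  else if n % 5 = 3 then 8 * (3 : ℝ) ^ (((n : ℝ) - 8) / 5)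
  else (3 : ℝ) ^ (((n : ℝ) + 1) / 5)

noncomputable def C : ℕ → ℝ
  | 0 => 4/3
  | 1 => 5/3
  | 2 => 2
  | 3 => 8/3
  | _ => 3

lemma fC (n : ℕ) (h2 : 2 ≤ n) (h3 : n ≠ 3) : f n = C (n % 5) * 3 ^ (n / 5) := by
  obtain ⟨a, r, hr, rfl⟩ : ∃ a r, r < 5 ∧ n = 5*a + r := ⟨n/5, n%5, by omega, by omega⟩
  have hmod : (5*a+r) % 5 = r := by omega
  have hdiv : (5*a+r) / 5 = a := by omega
  rw [hmod, hdiv]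
  unfold f
  interval_cases r
  · have ha : 1 ≤ a := by omega
    rw [if_neg (by omega), if_neg (by omega), if_pos (by omega)]
    have e1 : ((5*a+0:ℕ):ℝ)/5 - 1 = ((a - 1 : ℕ):ℝ) := by
      rw [Nat.cast_sub ha]; push_cast; ring
    rw [e1, Real.rpow_natCast]
    have e2 : (3:ℝ)^a = 3^(a-1)*3 := by rw [← pow_succ]; congr 1; omega
    rw [e2]; show _ = 4/3 * _; ring
  · have ha : 1 ≤ a := by omega
    rw [if_neg (by omega), if_neg (by omega), if_neg (by omega), if_pos (by omega)]
    have e1 : (((5*a+1:ℕ):ℝ) - 6)/5 = ((a - 1 : ℕ):ℝ) := by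
      rw [Nat.cast_sub ha]; push_cast; ring
    rw [e1, Real.rpow_natCast]
    have e2 : (3:ℝ)^a = 3^(a-1)*3 := by rw [← pow_succ]; congr 1; omega
    rw [e2]; show _ = 5/3 * _; ring
  · rcases Nat.eq_zero_or_pos a with rfl | ha
    · norm_num [C]
    · rw [if_neg (by omega), if_neg (by omega), if_neg (by omega), if_neg (by omega),
        if_pos (by omega)]
      have e1 : (((5*a+2:ℕ):ℝ) - 2)/5 = ((a : ℕ):ℝ) := by push_cast; ring
      rw [e1, Real.rpow_natCast]; show _ = 2 * _; ring
  · have ha : 1 ≤ a := by omega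
    rw [if_neg (by omega), if_neg (by omega), if_neg (by omega), if_neg (by omega),
      if_neg (by omega), if_pos (by omega)]
    have e1 : (((5*a+3:ℕ):ℝ) - 8)/5 = ((a - 1 : ℕ):ℝ) := by
      rw [Nat.cast_sub ha]; push_cast; ring
    rw [e1, Real.rpow_natCast]
    have e2 : (3:ℝ)^a = 3^(a-1)*3 := by rw [← pow_succ]; congr 1; omega
    rw [e2]; show _ = 8/3 * _; ring
  · rw [if_neg (by omega), if_neg (by omega), if_neg (by omega), if_neg (by omega),
      if_neg (by omega), if_neg (by omega)]
    have e1 : (((5*a+4:ℕ):ℝ) + 1)/5 = ((a + 1 : ℕ):ℝ) := by push_cast; ring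
    rw [e1, Real.rpow_natCast, pow_succ]
    show _ = 3 * _; ring

lemma f3 : f 3 = 2 := by norm_num [f]

lemma Cmul (r s : ℕ) (hr : r < 5) (hs : s < 5) :
    C ((r+s)%5) * 3^((r+s)/5) ≤ C r * C s := by
  interval_cases r <;> interval_cases s <;> norm_num [C]

lemma C3 (s : ℕ) (hs : s < 5) :
    C ((s+3)%5) * 3^((s+3)/5) ≤ 2 * C s := by
  interval_cases s <;> norm_num [C]

lemma main_ne (n m : ℕ) (hn : 2 ≤ n) (hm : 2 ≤ m) (hn3 : n ≠ 3) (hm3 : m ≠ 3) :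
    f (n + m) ≤ f n * f m := by
  rw [fC n hn hn3, fC m hm hm3, fC (n+m) (by omega) (by omega)]
  have hmod : (n+m)%5 = (n%5 + m%5)%5 := by omega
  have hdiv : (n+m)/5 = n/5 + m/5 + (n%5 + m%5)/5 := by omega
  rw [hmod, hdiv, pow_add, pow_add]
  have hpos : (0:ℝ) < 3 ^ (n/5) * 3 ^ (m/5) := by positivity
  calc C ((n%5 + m%5)%5) * (3 ^ (n/5) * 3 ^ (m/5) * 3 ^ ((n%5+m%5)/5))
      = (C ((n%5 + m%5)%5) * 3 ^ ((n%5+m%5)/5)) * (3 ^ (n/5) * 3 ^ (m/5)) := by ring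
    _ ≤ (C (n%5) * C (m%5)) * (3 ^ (n/5) * 3 ^ (m/5)) := by
        exact mul_le_mul_of_nonneg_right (Cmul _ _ (by omega) (by omega)) (le_of_lt hpos)
    _ = C (n%5) * 3 ^ (n/5) * (C (m%5) * 3 ^ (m/5)) := by ring

lemma main3 (m : ℕ) (hm : 2 ≤ m) (hm3 : m ≠ 3) : f (3 + m) ≤ f 3 * f m := by
  rw [f3, fC m hm hm3, fC (3+m) (by omega) (by omega)]
  have hmod : (3+m)%5 = (m%5 + 3)%5 := by omega
  have hdiv : (3+m)/5 = m/5 + (m%5 + 3)/5 := by omega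
  rw [hmod, hdiv, pow_add]
  have hpos : (0:ℝ) ≤ 3 ^ (m/5) := by positivity
  calc C ((m%5 + 3)%5) * (3 ^ (m/5) * 3 ^ ((m%5+3)/5))
      = (C ((m%5+3)%5) * 3 ^ ((m%5+3)/5)) * 3 ^ (m/5) := by ring
    _ ≤ (2 * C (m%5)) * 3 ^ (m/5) := mul_le_mul_of_nonneg_right (C3 _ (by omega)) hpos
    _ = 2 * (C (m%5) * 3 ^ (m/5)) := by ring

theorem stmt_11 (n m : ℕ) (hn : 2 ≤ n) (hm : 2 ≤ m) (h : ¬ (n = 3 ∧ m = 3)) :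
    f (n + m) ≤ f n * f m := by
  by_cases hn3 : n = 3
  · subst hn3
    have hm3 : m ≠ 3 := fun hm3 => h ⟨rfl, hm3⟩
    exact main3 m hm hm3
  · by_cases hm3 : m = 3
    · subst hm3
      rw [Nat.add_comm, mul_comm]
      exact main3 n hn hn3
    · exact main_ne n m hn hm hn3 hm3
end

section
/- Define f(1)=1, f(2)=f(3)=2, and for n ≥ 4: f(n) = 4·3^{n/5 - 1} if n ≡ 0 (mod 5), 5·3^{(n-6)/5} if n ≡ 1, 2·3^{(n-2)/5} if n ≡ 2, 8·3^{(n-8)/5} if n ≡ 3, 3^{(n+1)/5} if n ≡ 4. Then f(n-1)·f(m-1) ≥ f(n+m-1) for all integers n, m ≥ 5. -/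
noncomputable def c : ℕ → ℝ := fun r =>
  if r = 0 then 4/3 else if r = 1 then 5/3 else if r = 2 then 2
  else if r = 3 then 8/3 else 3

lemma fval (q r : ℕ) (hr : r < 5) (hk : 4 ≤ 5*q + r) :
    f (5*q + r) = c r * 3 ^ q := by
  have hmod : (5*q + r) % 5 = r := by omega
  unfold f
  rw [if_neg (by omega), if_neg (by omega), hmod]
  interval_cases r
  · obtain ⟨q', rfl⟩ : ∃ q', q = q' + 1 := ⟨q - 1, by omega⟩
    rw [if_pos rfl]
    have h : ((5*(q'+1) + 0 : ℕ) : ℝ) / 5 - 1 = ((q' : ℕ) : ℝ) := by push_cast; ring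
    rw [h, Real.rpow_natCast]
    simp [c]; ring
  · obtain ⟨q', rfl⟩ : ∃ q', q = q' + 1 := ⟨q - 1, by omega⟩
    rw [if_neg (by norm_num), if_pos rfl]
    have h : (((5*(q'+1) + 1 : ℕ) : ℝ) - 6) / 5 = ((q' : ℕ) : ℝ) := by push_cast; ring
    rw [h, Real.rpow_natCast]
    simp [c]; ring
  · rw [if_neg (by norm_num), if_neg (by norm_num), if_pos rfl]
    have h : (((5*q + 2 : ℕ) : ℝ) - 2) / 5 = ((q : ℕ) : ℝ) := by push_cast; ring
    rw [h, Real.rpow_natCast]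
    simp [c]
  · obtain ⟨q', rfl⟩ : ∃ q', q = q' + 1 := ⟨q - 1, by omega⟩
    rw [if_neg (by norm_num), if_neg (by norm_num), if_neg (by norm_num), if_pos rfl]
    have h : (((5*(q'+1) + 3 : ℕ) : ℝ) - 8) / 5 = ((q' : ℕ) : ℝ) := by push_cast; ring
    rw [h, Real.rpow_natCast]
    simp [c]; ring
  · rw [if_neg (by norm_num), if_neg (by norm_num), if_neg (by norm_num), if_neg (by norm_num)]
    have h : (((5*q + 4 : ℕ) : ℝ) + 1) / 5 = ((q + 1 : ℕ) : ℝ) := by push_cast; ring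
    rw [h, Real.rpow_natCast]
    simp [c]; ring

lemma key (p q r s : ℕ) (hr : r < 5) (hs : s < 5) :
    c ((r+s+1) % 5) * 3 ^ (p + q + (r+s+1)/5) ≤ (c r * 3^p) * (c s * 3^q) := by
  have h3pq : (0:ℝ) < 3^p * 3^q := by positivity
  rw [pow_add, pow_add]
  interval_cases r <;> interval_cases s <;> norm_num [c] <;> nlinarith [h3pq]

theorem stmt_12 (n m : ℕ) (hn : 5 ≤ n) (hm : 5 ≤ m) :
    f (n + m - 1) ≤ f (n - 1) * f (m - 1) := by
  obtain ⟨p, r, hr, ha⟩ : ∃ p r, r < 5 ∧ n - 1 = 5*p + r :=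
    ⟨(n-1)/5, (n-1)%5, Nat.mod_lt _ (by norm_num), by omega⟩
  obtain ⟨q, s, hs, hb⟩ : ∃ q s, s < 5 ∧ m - 1 = 5*q + s :=
    ⟨(m-1)/5, (m-1)%5, Nat.mod_lt _ (by norm_num), by omega⟩
  have h1 : n + m - 1 = 5*(p + q + (r+s+1)/5) + (r+s+1)%5 := by omega
  rw [ha, hb, h1, fval _ _ (by omega) (by omega), fval _ _ hr (by omega),
    fval _ _ hs (by omega)]
  exact key p q r s hr hs
end

section
/- Let T be a tree with a leaf x whose neighbour is y; let u_1,...,u_r be the other neighbours of y, let U_i be the component of T − {x,y} containing u_i, and let W_{i,1},...,W_{i,s_i} be the components of U_i − u_i. Then imax(T) = ∏_{i=1}^r imax(U_i) + ∏_{i=1}^r ∏_{j=1}^{s_i} imax(W_{i,j}). -/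
open SimpleGraph

lemma isMaxIndep_iff {V : Type*} (G : SimpleGraph V) (s : Set V) :
    IsMaxIndep G s ↔ IsIndep G s ∧ ∀ v ∉ s, ∃ u ∈ s, G.Adj u v := by
  constructor
  · rintro ⟨hi, hm⟩
    refine ⟨hi, fun v hv => ?_⟩
    by_contra h
    push_neg at h
    have hind : IsIndep G (insert v s) := by
      intro a ha b hb
      rcases ha with rfl | ha
      · rcases hb with rfl | hb
        · exact fun h' => G.irrefl h'
        · exact fun h' => h b hb h'.symm
      · rcases hb with rfl | hb
        · exact fun h' => h a ha h'
        · exact hi ha hb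
    have := hm _ hind (Set.subset_insert v s)
    exact hv (this ▸ Set.mem_insert v s)
  · rintro ⟨hi, hd⟩
    refine ⟨hi, fun t hti hst => ?_⟩
    refine Set.Subset.antisymm hst fun v hv => ?_
    by_contra hvs
    obtain ⟨u, hu, hadj⟩ := hd v hvs
    exact hti (hst hu) hv hadj

lemma maxIndep_components_iff {W : Type*} (G : SimpleGraph W) (s : Set W) :
    IsMaxIndep G s ↔ ∀ C : G.ConnectedComponent,
      IsMaxIndep (G.induce C.supp) {v : C.supp | (v : W) ∈ s} := by
  simp only [isMaxIndep_iff]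
  constructor
  · rintro ⟨hi, hd⟩ C
    constructor
    · rintro ⟨u, hu⟩ hus ⟨v, hv⟩ hvs hadj
      exact hi hus hvs hadj
    · rintro ⟨v, hv⟩ hvs
      obtain ⟨u, hu, hadj⟩ := hd v hvs
      have huC : u ∈ C.supp := by
        rw [ConnectedComponent.mem_supp_iff] at hv ⊢
        rw [← hv]
        exact ConnectedComponent.sound hadj.reachable
      exact ⟨⟨u, huC⟩, hu, hadj⟩
  · intro h
    constructor
    · intro u hu v hv hadj
      have huC : u ∈ (G.connectedComponentMk v).supp :=
        ConnectedComponent.sound hadj.reachable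
      have hvC : v ∈ (G.connectedComponentMk v).supp := rfl
      exact (h (G.connectedComponentMk v)).1 (by exact hu : ((⟨u, huC⟩ : (G.connectedComponentMk v).supp) : W) ∈ s) (by exact hv : ((⟨v, hvC⟩ : (G.connectedComponentMk v).supp) : W) ∈ s) hadj
    · intro v hv
      have hvC : v ∈ (G.connectedComponentMk v).supp := rfl
      obtain ⟨⟨u, huC⟩, hu, hadj⟩ := (h (G.connectedComponentMk v)).2 ⟨v, hvC⟩ hv
      exact ⟨u, hu, hadj⟩

lemma restrict_glue {W : Type*} (G : SimpleGraph W)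
    (f : ∀ C : G.ConnectedComponent, Set C.supp) (C : G.ConnectedComponent) :
    {v : C.supp | (v : W) ∈ {w : W | (⟨w, rfl⟩ : (G.connectedComponentMk w).supp) ∈ f (G.connectedComponentMk w)}} = f C := by
  ext ⟨v, hv⟩
  have hv' : G.connectedComponentMk v = C := hv
  subst hv'
  rfl

noncomputable def compEquiv {W : Type*} (G : SimpleGraph W) :
    {s : Set W // IsMaxIndep G s} ≃
      ∀ C : G.ConnectedComponent, {t : Set C.supp // IsMaxIndep (G.induce C.supp) t} where
  toFun s := fun C => ⟨{v : C.supp | (v : W) ∈ s.1}, (maxIndep_components_iff G s.1).1 s.2 C⟩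
  invFun f := ⟨{w : W | (⟨w, rfl⟩ : (G.connectedComponentMk w).supp) ∈ (f (G.connectedComponentMk w)).1}, by
    rw [maxIndep_components_iff]
    intro C
    rw [restrict_glue G (fun C => (f C).1) C]
    exact (f C).2⟩
  left_inv s := by
    apply Subtype.ext
    rfl
  right_inv f := by
    funext C
    apply Subtype.ext
    exact restrict_glue G (fun C => (f C).1) C

lemma imax_eq_prod {W : Type*} [Finite W] (G : SimpleGraph W) :
    imax G = ∏ᶠ C : G.ConnectedComponent, imax (G.induce C.supp) := by
  classical
  have : Fintype G.ConnectedComponent := Fintype.ofFinite _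
  have h1 : imax G = Nat.card {s : Set W // IsMaxIndep G s} := rfl
  rw [h1, Nat.card_congr (compEquiv G), Nat.card_pi, finprod_eq_prod_of_fintype]
  rfl

section X
variable {V : Type*}

lemma adj_x_iff (T : SimpleGraph V) (x y : V) (hleaf : T.neighborSet x = {y}) (w : V) : T.Adj x w ↔ w = y := by
  rw [← mem_neighborSet, hleaf, Set.mem_singleton_iff]

lemma maxIndepX_iff (T : SimpleGraph V) (x y : V) (hleaf : T.neighborSet x = {y}) (s : Set V) (hx : x ∈ s) (hs : IsMaxIndep T s) :
    IsMaxIndep (T.induce {v : V | v ∉ ({x, y} : Set V)})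
      {v : {v : V | v ∉ ({x, y} : Set V)} | (v : V) ∈ s} := by
  have hadj : T.Adj x y := (adj_x_iff T x y hleaf y).2 rfl
  have hy : y ∉ s := fun hy => hs.1 hx hy hadj
  rw [isMaxIndep_iff] at hs ⊢
  constructor
  · rintro ⟨u, hu⟩ hus ⟨v, hv⟩ hvs h
    exact hs.1 hus hvs h
  · rintro ⟨v, hv⟩ hvs
    obtain ⟨u, hu, huv⟩ := hs.2 v hvs
    have hux : u ≠ x := by
      intro h
      rw [h] at huv
      exact hv (by simp [(adj_x_iff T x y hleaf v).1 huv])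
    have huy : u ≠ y := fun h => hy (h ▸ hu)
    have huA : u ∉ ({x, y} : Set V) := by simp [hux, huy]
    exact ⟨⟨u, huA⟩, hu, huv⟩

lemma maxIndepX_glue (T : SimpleGraph V) (x y : V) (hleaf : T.neighborSet x = {y}) (t : Set {v : V | v ∉ ({x, y} : Set V)})
    (ht : IsMaxIndep (T.induce {v : V | v ∉ ({x, y} : Set V)}) t) :
    IsMaxIndep T (insert x ((fun (v : {v : V | v ∉ ({x, y} : Set V)}) => (v : V)) '' t)) := by
  have hadj : T.Adj x y := (adj_x_iff T x y hleaf y).2 rfl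
  rw [isMaxIndep_iff] at ht ⊢
  constructor
  · intro a ha b hb h
    rcases Set.mem_insert_iff.1 ha with hax | ⟨⟨a', ha'⟩, hat, rfl⟩
    · rcases Set.mem_insert_iff.1 hb with hbx | ⟨⟨b', hb'⟩, hbt, rfl⟩
      · rw [hax, hbx] at h; exact T.irrefl h
      · rw [hax] at h
        exact hb' (Set.mem_insert_iff.2 (Or.inr ((adj_x_iff T x y hleaf _).1 h)))
    · rcases Set.mem_insert_iff.1 hb with hbx | ⟨⟨b', hb'⟩, hbt, rfl⟩
      · rw [hbx] at h
        exact ha' (Set.mem_insert_iff.2 (Or.inr ((adj_x_iff T x y hleaf _).1 h.symm)))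
      · exact ht.1 hat hbt h
  · intro v hv
    have hvx : v ≠ x := fun h => hv (by rw [h]; exact Set.mem_insert _ _)
    by_cases hvy : v = y
    · exact ⟨x, Set.mem_insert _ _, hvy ▸ hadj⟩
    · have hvA : v ∉ ({x, y} : Set V) := by simp [hvx, hvy]
      have hvt : (⟨v, hvA⟩ : {v : V | v ∉ ({x, y} : Set V)}) ∉ t := by
        intro h
        exact hv (Set.mem_insert_iff.2 (Or.inr ⟨_, h, rfl⟩))
      obtain ⟨⟨u, hu⟩, hut, huv⟩ := ht.2 _ hvt
      exact ⟨u, Set.mem_insert_iff.2 (Or.inr ⟨_, hut, rfl⟩), huv⟩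

noncomputable def equivX (T : SimpleGraph V) (x y : V) (hleaf : T.neighborSet x = {y}) :
    {s : Set V // IsMaxIndep T s ∧ x ∈ s} ≃
      {t : Set {v : V | v ∉ ({x, y} : Set V)} //
        IsMaxIndep (T.induce {v : V | v ∉ ({x, y} : Set V)}) t} where
  toFun s := ⟨{v | (v : V) ∈ s.1}, maxIndepX_iff T x y hleaf s.1 s.2.2 s.2.1⟩
  invFun t := ⟨insert x ((fun (v : {v : V | v ∉ ({x, y} : Set V)}) => (v : V)) '' t.1), maxIndepX_glue T x y hleaf t.1 t.2, Set.mem_insert _ _⟩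
  left_inv := by
    rintro ⟨s, hs, hx⟩
    have hadj : T.Adj x y := (adj_x_iff T x y hleaf y).2 rfl
    have hy : y ∉ s := fun hy => hs.1 hx hy hadj
    apply Subtype.ext
    ext w
    simp only [Set.mem_insert_iff, Set.mem_image, Set.mem_setOf_eq]
    constructor
    · rintro (rfl | ⟨⟨u, hu⟩, hus, rfl⟩)
      · exact hx
      · exact hus
    · intro hw
      by_cases hwx : w = x
      · exact Or.inl hwx
      · have hwy : w ≠ y := fun h => hy (h ▸ hw)
        exact Or.inr ⟨⟨w, by simp [hwx, hwy]⟩, hw, rfl⟩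
  right_inv := by
    rintro ⟨t, ht⟩
    apply Subtype.ext
    ext ⟨v, hv⟩
    simp only [Set.mem_setOf_eq, Set.mem_insert_iff, Set.mem_image]
    constructor
    · rintro (h | ⟨⟨u, hu⟩, hut, h⟩)
      · exact absurd (by simp [h]) hv
      · exact (show (⟨u, hu⟩ : {v : V | v ∉ ({x, y} : Set V)}) = ⟨v, hv⟩ from Subtype.ext h) ▸ hut
    · intro h
      exact Or.inr ⟨⟨v, hv⟩, h, rfl⟩

end X

section Y
variable {V : Type*}

lemma maxIndepY_iff (T : SimpleGraph V) (x y : V) (hleaf : T.neighborSet x = {y}) (s : Set V) (hy : y ∈ s) (hs : IsMaxIndep T s) :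
    IsMaxIndep (T.induce {v : V | v ∉ ({x, y} : Set V) ∧ v ∉ T.neighborSet y})
      {v : {v : V | v ∉ ({x, y} : Set V) ∧ v ∉ T.neighborSet y} | (v : V) ∈ s} := by
  have hadj : T.Adj x y := (adj_x_iff T x y hleaf y).2 rfl
  have hx : x ∉ s := fun hx => hs.1 hx hy hadj
  rw [isMaxIndep_iff] at hs ⊢
  constructor
  · rintro ⟨u, hu⟩ hus ⟨v, hv⟩ hvs h
    exact hs.1 hus hvs h
  · rintro ⟨v, hv⟩ hvs
    obtain ⟨u, hu, huv⟩ := hs.2 v hvs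
    have hux : u ≠ x := by
      intro h
      rw [h] at huv
      exact hv.1 (by simp [(adj_x_iff T x y hleaf v).1 huv])
    have huy : u ≠ y := by
      intro h
      rw [h] at huv
      exact hv.2 huv
    have huN : u ∉ T.neighborSet y := fun hN => hs.1 hy hu hN
    exact ⟨⟨u, ⟨by simp [hux, huy], huN⟩⟩, hu, huv⟩

lemma maxIndepY_glue (T : SimpleGraph V) (x y : V) (hleaf : T.neighborSet x = {y})
    (t : Set {v : V | v ∉ ({x, y} : Set V) ∧ v ∉ T.neighborSet y})
    (ht : IsMaxIndep (T.induce {v : V | v ∉ ({x, y} : Set V) ∧ v ∉ T.neighborSet y}) t) :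
    IsMaxIndep T (insert y ((fun (v : {v : V | v ∉ ({x, y} : Set V) ∧ v ∉ T.neighborSet y}) => (v : V)) '' t)) := by
  have hadj : T.Adj x y := (adj_x_iff T x y hleaf y).2 rfl
  rw [isMaxIndep_iff] at ht ⊢
  constructor
  · intro a ha b hb h
    rcases Set.mem_insert_iff.1 ha with hay | ⟨⟨a', ha'⟩, hat, rfl⟩
    · rcases Set.mem_insert_iff.1 hb with hby | ⟨⟨b', hb'⟩, hbt, rfl⟩
      · rw [hay, hby] at h; exact T.irrefl h
      · rw [hay] at h
        exact hb'.2 h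
    · rcases Set.mem_insert_iff.1 hb with hby | ⟨⟨b', hb'⟩, hbt, rfl⟩
      · rw [hby] at h
        exact ha'.2 h.symm
      · exact ht.1 hat hbt h
  · intro v hv
    have hvy : v ≠ y := fun h => hv (by rw [h]; exact Set.mem_insert _ _)
    by_cases hvx : v = x
    · exact ⟨y, Set.mem_insert _ _, by rw [hvx]; exact hadj.symm⟩
    by_cases hvN : v ∈ T.neighborSet y
    · exact ⟨y, Set.mem_insert _ _, hvN⟩
    · have hvA : v ∈ {v : V | v ∉ ({x, y} : Set V) ∧ v ∉ T.neighborSet y} :=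
        ⟨by simp [hvx, hvy], hvN⟩
      have hvt : (⟨v, hvA⟩ : {v : V | v ∉ ({x, y} : Set V) ∧ v ∉ T.neighborSet y}) ∉ t := by
        intro h
        exact hv (Set.mem_insert_iff.2 (Or.inr ⟨_, h, rfl⟩))
      obtain ⟨⟨u, hu⟩, hut, huv⟩ := ht.2 _ hvt
      exact ⟨u, Set.mem_insert_iff.2 (Or.inr ⟨_, hut, rfl⟩), huv⟩

noncomputable def equivY (T : SimpleGraph V) (x y : V) (hleaf : T.neighborSet x = {y}) :
    {s : Set V // IsMaxIndep T s ∧ y ∈ s} ≃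
      {t : Set {v : V | v ∉ ({x, y} : Set V) ∧ v ∉ T.neighborSet y} //
        IsMaxIndep (T.induce {v : V | v ∉ ({x, y} : Set V) ∧ v ∉ T.neighborSet y}) t} where
  toFun s := ⟨{v | (v : V) ∈ s.1}, maxIndepY_iff T x y hleaf s.1 s.2.2 s.2.1⟩
  invFun t := ⟨insert y ((fun (v : {v : V | v ∉ ({x, y} : Set V) ∧ v ∉ T.neighborSet y}) => (v : V)) '' t.1),
    maxIndepY_glue T x y hleaf t.1 t.2, Set.mem_insert _ _⟩
  left_inv := by
    rintro ⟨s, hs, hy⟩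
    have hadj : T.Adj x y := (adj_x_iff T x y hleaf y).2 rfl
    have hx : x ∉ s := fun hx => hs.1 hx hy hadj
    apply Subtype.ext
    ext w
    simp only [Set.mem_insert_iff, Set.mem_image, Set.mem_setOf_eq]
    constructor
    · rintro (rfl | ⟨⟨u, hu⟩, hus, rfl⟩)
      · exact hy
      · exact hus
    · intro hw
      by_cases hwy : w = y
      · exact Or.inl hwy
      · have hwx : w ≠ x := fun h => hx (h ▸ hw)
        have hwN : w ∉ T.neighborSet y := fun hN => hs.1 hy hw hN
        exact Or.inr ⟨⟨w, ⟨by simp [hwx, hwy], hwN⟩⟩, hw, rfl⟩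
  right_inv := by
    rintro ⟨t, ht⟩
    apply Subtype.ext
    ext ⟨v, hv⟩
    simp only [Set.mem_setOf_eq, Set.mem_insert_iff, Set.mem_image]
    constructor
    · rintro (h | ⟨⟨u, hu⟩, hut, h⟩)
      · exact absurd (by simp [h]) hv.1
      · exact (show (⟨u, hu⟩ : {v : V | v ∉ ({x, y} : Set V) ∧ v ∉ T.neighborSet y}) = ⟨v, hv⟩ from Subtype.ext h) ▸ hut
    · intro h
      exact Or.inr ⟨⟨v, hv⟩, h, rfl⟩

end Y


/-- Wilf's formula: if `x` is a leaf of a tree `T` with neighbour `y`, the `U_i` are the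
connected components of `T - {x, y}`, and the `W_{i,j}` are the components of `U_i - u_i`
(where `u_i` is the neighbour of `y` in `U_i`), i.e. the components of `T - {x, y} - N(y)`,
then `imax T = ∏ᵢ imax Uᵢ + ∏ᵢ ∏ⱼ imax W_{i,j}`. -/
theorem stmt_13 {V : Type*} [Fintype V] (T : SimpleGraph V) (htree : T.IsTree)
    (x y : V) (hleaf : T.neighborSet x = {y}) :
    imax T =
      (∏ᶠ C : (T.induce {v : V | v ∉ ({x, y} : Set V)}).ConnectedComponent,
        imax ((T.induce {v : V | v ∉ ({x, y} : Set V)}).induce C.supp))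
      +
      (∏ᶠ C : (T.induce {v : V | v ∉ ({x, y} : Set V) ∧ v ∉ T.neighborSet y}).ConnectedComponent,
        imax ((T.induce
          {v : V | v ∉ ({x, y} : Set V) ∧ v ∉ T.neighborSet y}).induce C.supp)) := by
  classical
  have hadj : T.Adj x y := (adj_x_iff T x y hleaf y).2 rfl
  have hsplit : {s : Set V | IsMaxIndep T s} =
      {s : Set V | IsMaxIndep T s ∧ x ∈ s} ∪ {s : Set V | IsMaxIndep T s ∧ y ∈ s} := by
    ext s
    simp only [Set.mem_setOf_eq, Set.mem_union]
    constructor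
    · intro hs
      by_cases hx : x ∈ s
      · exact Or.inl ⟨hs, hx⟩
      by_cases hy : y ∈ s
      · exact Or.inr ⟨hs, hy⟩
      exfalso
      rw [isMaxIndep_iff] at hs
      obtain ⟨u, hu, huadj⟩ := hs.2 x hx
      have : u = y := (adj_x_iff T x y hleaf u).1 huadj.symm
      exact hy (this ▸ hu)
    · rintro (⟨h, _⟩ | ⟨h, _⟩) <;> exact h
  have hdisj : Disjoint {s : Set V | IsMaxIndep T s ∧ x ∈ s}
      {s : Set V | IsMaxIndep T s ∧ y ∈ s} := by
    rw [Set.disjoint_left]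
    rintro s ⟨hs, hx⟩ ⟨_, hy⟩
    exact hs.1 hx hy hadj
  have h1 : Set.ncard {s : Set V | IsMaxIndep T s ∧ x ∈ s}
      = imax (T.induce {v : V | v ∉ ({x, y} : Set V)}) := by
    rw [imax, ← Nat.card_coe_set_eq, ← Nat.card_coe_set_eq]
    exact Nat.card_congr (equivX T x y hleaf)
  have h2 : Set.ncard {s : Set V | IsMaxIndep T s ∧ y ∈ s}
      = imax (T.induce {v : V | v ∉ ({x, y} : Set V) ∧ v ∉ T.neighborSet y}) := by
    rw [imax, ← Nat.card_coe_set_eq, ← Nat.card_coe_set_eq]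
    exact Nat.card_congr (equivY T x y hleaf)
  have h0 : imax T = Set.ncard {s : Set V | IsMaxIndep T s} := rfl
  rw [h0, hsplit, Set.ncard_union_eq hdisj (Set.toFinite _) (Set.toFinite _), h1, h2,
    imax_eq_prod (T.induce {v : V | v ∉ ({x, y} : Set V)}),
    imax_eq_prod (T.induce {v : V | v ∉ ({x, y} : Set V) ∧ v ∉ T.neighborSet y})]
end

section
/- Define majorization on pairs of reals by (a,b) ⪰ (a',b') iff a ≥ a' and a + b ≥ a' + b'. If (a,b) ⪰ (a',b') and (c,d) ⪰ (c',d') for nonnegative reals with a' ≥ b' and c' ≥ d', then (ac, bd) ⪰ (a'c', b'd'). -/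
/-- Majorization of pairs of reals. -/
def Majorizes (p q : ℝ × ℝ) : Prop := p.1 ≥ q.1 ∧ p.1 + p.2 ≥ q.1 + q.2

theorem stmt_16 (a b c d a' b' c' d' : ℝ)
    (ha : 0 ≤ a) (hb : 0 ≤ b) (hc : 0 ≤ c) (hd : 0 ≤ d)
    (ha' : 0 ≤ a') (hb' : 0 ≤ b') (hc' : 0 ≤ c') (hd' : 0 ≤ d')
    (h1 : Majorizes (a, b) (a', b')) (h2 : Majorizes (c, d) (c', d'))
    (hab : a' ≥ b') (hcd : c' ≥ d') :
    Majorizes (a * c, b * d) (a' * c', b' * d') := by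
  obtain ⟨h11, h12⟩ := h1
  obtain ⟨h21, h22⟩ := h2
  simp only [Majorizes] at *
  refine ⟨mul_le_mul h11 h21 hc' (le_trans ha' h11), ?_⟩
  rcases le_or_gt b' b with hbb | hbb <;> rcases le_or_gt d' d with hdd | hdd
  · nlinarith [mul_le_mul h11 h21 hc' (le_trans ha' h11), mul_le_mul hbb hdd hd' hb]
  · -- b ≥ b', d < d' : use c ≥ c' + d' - d
    nlinarith [mul_nonneg (sub_nonneg.2 h11) (sub_nonneg.2 (le_trans h21 (by linarith : c ≤ c))),
      mul_le_mul_of_nonneg_left (by linarith : c' + d' - d ≤ c) ha,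
      mul_nonneg (sub_nonneg.2 h11) hc', mul_nonneg (sub_nonneg.2 (le_trans hab h11)) (by linarith : (0:ℝ) ≤ d' - d),
      mul_nonneg (sub_nonneg.2 hbb) hd]
  · -- b < b', d ≥ d' : use a ≥ a' + b' - b
    nlinarith [mul_le_mul_of_nonneg_left (by linarith : a' + b' - b ≤ a) hc,
      mul_nonneg ha' (sub_nonneg.2 h21),
      mul_nonneg (by linarith : (0:ℝ) ≤ b' - b) (by linarith : (0:ℝ) ≤ c - d'),
      mul_nonneg hb (sub_nonneg.2 hdd)]
  · -- both smaller
    nlinarith [mul_le_mul (by linarith : a' + b' - b ≤ a) (by linarith : c' + d' - d ≤ c) (by linarith) ha,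
      mul_nonneg (sub_nonneg.2 hab) (by linarith : (0:ℝ) ≤ d' - d),
      mul_nonneg (by linarith : (0:ℝ) ≤ b' - b) (sub_nonneg.2 hcd),
      mul_nonneg (by linarith : (0:ℝ) ≤ b' - b) (by linarith : (0:ℝ) ≤ d' - d)]
end

section
/- The number of maximal independent sets of the cycle C_n (n ≥ 3) satisfies the Perrin recurrence: imax(C_n) = imax(C_{n-2}) + imax(C_{n-3}) for n ≥ 6, with imax(C_3) = 3, imax(C_4) = 2, imax(C_5) = 5. -/
/-
Encode a set `s` of vertices of `C_n` by the cyclic word of pairs `(i ∈ s, i + 1 ∈ s)`. Being a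
maximal independent set is a condition on consecutive pairs only (no two neighbours in `s`, no
three consecutive vertices outside `s`), so maximal independent sets of `C_n` are the closed walks
of length `n` in a four-state transition digraph, and `imax C_n = trace (T ^ n)` for its adjacency
(transfer) matrix `T`. The characteristic polynomial of `T` is `X * (X ^ 3 - X - 1)`, hence
`T ^ 4 = T ^ 2 + T`, and taking traces of `T ^ (n - 4) * T ^ 4` gives the Perrin recurrence.
-/

open SimpleGraph

open Finset

lemma snoc_self_zero_succ {α : Type*} {n : ℕ} (w : Fin (n + 1) → α) (i : Fin (n + 1)) :
    Fin.snoc (α := fun _ => α) w (w 0) i.succ = w (i + 1) := by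
  induction i using Fin.lastCases with
  | last => rw [Fin.succ_last, Fin.snoc_last, Fin.last_add_one]
  | cast j => rw [← Fin.castSucc_succ, Fin.snoc_castSucc, Fin.coeSucc_eq_succ]

section TransferMatrix

variable {α : Type*} (r : α → α → Prop) [DecidableRel r]

def transferMatrix : Matrix α α ℕ := .of fun a b => if r a b then 1 else 0

variable [Fintype α] [DecidableEq α]

def chainsBetween (n : ℕ) (a b : α) : Finset (Fin (n + 1) → α) :=
  {v | v 0 = a ∧ v (Fin.last n) = b ∧ ∀ i : Fin n, r (v i.castSucc) (v i.succ)}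

def cyclicChains (n : ℕ) : Finset (Fin (n + 1) → α) :=
  {w | ∀ i, r (w i) (w (i + 1))}

variable {r}

lemma cons_mem_chainsBetween_succ {n : ℕ} {a a' b : α} {w : Fin (n + 1) → α} :
    Fin.cons a w ∈ chainsBetween r (n + 1) a' b ↔
      a = a' ∧ r a (w 0) ∧ w ∈ chainsBetween r n (w 0) b := by
  simp only [chainsBetween, mem_filter, mem_univ, true_and, Fin.forall_fin_succ, ← Fin.succ_last,
    Fin.cons_zero, Fin.cons_succ, Fin.cons_one, Fin.castSucc_zero, Fin.succ_zero_eq_one,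
    Fin.castSucc_succ]
  tauto

lemma filter_chainsBetween_succ (n : ℕ) (a b c : α) :
    {v ∈ chainsBetween r (n + 1) a b | v 1 = c} =
      if r a c then (chainsBetween r n c b).image (Fin.cons a) else ∅ := by
  ext v
  induction v using Fin.consCases
  split_ifs <;>
  simp only [mem_filter, cons_mem_chainsBetween_succ, mem_image, Fin.cons_injective2.eq_iff,
    Fin.cons_one, notMem_empty] <;>
  grind [chainsBetween]

variable (r)

theorem card_chainsBetween (n : ℕ) (a b : α) :
    #(chainsBetween r n a b) = (transferMatrix r ^ n) a b := by
  induction n generalizing a with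
  | zero =>
    rw [pow_zero, Matrix.one_apply]
    split_ifs with hab
    · subst hab
      refine card_eq_one.2 ⟨fun _ => a, ?_⟩
      ext v
      simp [chainsBetween, funext_iff, Fin.forall_fin_one]
    · rw [card_eq_zero, chainsBetween, filter_eq_empty_iff]
      rintro v - ⟨rfl, h, -⟩
      exact hab h
  | succ n ih =>
    rw [pow_succ', Matrix.mul_apply, card_eq_sum_card_fiberwise (f := fun v => v 1)
      (fun _ _ => mem_univ _)]
    refine sum_congr rfl fun c _ => ?_
    rw [filter_chainsBetween_succ, ← ih, transferMatrix, Matrix.of_apply]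
    split_ifs
    · rw [card_image_of_injective _ (Fin.cons_right_injective (α := fun _ => α) a), one_mul]
    · rw [card_empty, zero_mul]

theorem card_cyclicChains (n : ℕ) :
    #(cyclicChains r n) = (transferMatrix r ^ (n + 1)).trace := by
  rw [Matrix.trace, card_eq_sum_card_fiberwise (f := fun w => w 0) (fun _ _ => mem_univ _)]
  refine sum_congr rfl fun a _ => ?_
  rw [Matrix.diag_apply, ← card_chainsBetween]
  -- cut the cycle open at `0`: a cyclic chain starting at `a` is a chain from `a` back to `a`
  refine card_nbij' (fun w => Fin.snoc w a) Fin.init ?_ ?_ (fun w _ => Fin.init_snoc ..) ?_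
  · intro w hw
    simp only [mem_coe, mem_filter, mem_univ, true_and, cyclicChains, chainsBetween] at hw ⊢
    obtain ⟨hw, rfl⟩ := hw
    refine ⟨Fin.snoc_apply_zero _ _, Fin.snoc_last _ _, fun i => ?_⟩
    rw [Fin.snoc_castSucc, snoc_self_zero_succ]
    exact hw i
  · intro v hv
    simp only [mem_coe, mem_filter, mem_univ, true_and, cyclicChains, chainsBetween] at hv ⊢
    obtain ⟨h0, hlast, hv⟩ := hv
    have hinit0 : Fin.init v 0 = a := h0
    have hsnoc : Fin.snoc (α := fun _ => α) (Fin.init v) (Fin.init v 0) = v := by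
      rw [hinit0, ← hlast, Fin.snoc_init_self]
    refine ⟨fun i => ?_, hinit0⟩
    rw [← snoc_self_zero_succ (Fin.init v), hsnoc]
    exact hv i
  · intro v hv
    simp only [mem_coe, mem_filter, mem_univ, true_and, chainsBetween] at hv
    exact hv.2.1 ▸ Fin.snoc_init_self v

end TransferMatrix

lemma isMaxIndep_iff_isIndep_and_dominating {V : Type*} {G : SimpleGraph V} {s : Set V} :
    IsMaxIndep G s ↔ IsIndep G s ∧ ∀ v ∉ s, ∃ u ∈ s, G.Adj u v := by
  refine ⟨fun ⟨hs, hmax⟩ => ⟨hs, fun v hv => ?_⟩,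
    fun ⟨hs, hdom⟩ => ⟨hs, fun t ht hst => ?_⟩⟩
  · by_contra! hnon
    have hins : IsIndep G (insert v s) := by
      rintro u (rfl | hu) w (rfl | hw) huw
      · exact G.irrefl huw
      · exact hnon w hw huw.symm
      · exact hnon u hu huw
      · exact hs hu hw huw
    exact hv ((hmax _ hins (Set.subset_insert v s)) ▸ Set.mem_insert v s)
  · refine hst.antisymm fun v hvt => ?_
    by_contra hvs
    obtain ⟨u, hus, huv⟩ := hdom v hvs
    exact ht (hst hus) hvt huv

lemma cycleGraph_adj_iff {n : ℕ} {u v : Fin (n + 2)} :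
    (cycleGraph (n + 2)).Adj u v ↔ u = v + 1 ∨ v = u + 1 := by
  rw [cycleGraph_adj, sub_eq_iff_eq_add, sub_eq_iff_eq_add, add_comm 1, add_comm 1]

lemma isIndep_cycleGraph_iff {n : ℕ} {s : Set (Fin (n + 2))} :
    IsIndep (cycleGraph (n + 2)) s ↔ ∀ i, ¬(i ∈ s ∧ i + 1 ∈ s) := by
  refine ⟨fun hs i ⟨hi, hi'⟩ => hs hi hi' (cycleGraph_adj_iff.2 (.inr rfl)), ?_⟩
  rintro hs u hu v hv huv
  rcases cycleGraph_adj_iff.1 huv with rfl | rfl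
  · exact hs v ⟨hv, hu⟩
  · exact hs u ⟨hu, hv⟩

lemma dominating_cycleGraph_iff {n : ℕ} {s : Set (Fin (n + 2))} :
    (∀ v ∉ s, ∃ u ∈ s, (cycleGraph (n + 2)).Adj u v) ↔
      ∀ i, i ∈ s ∨ i + 1 ∈ s ∨ i + 1 + 1 ∈ s := by
  refine ⟨fun hs i => ?_, fun hs v hv => ?_⟩
  · by_contra! hi
    obtain ⟨u, hu, huv⟩ := hs (i + 1) hi.2.1
    rcases cycleGraph_adj_iff.1 huv with rfl | h
    · exact hi.2.2 hu
    · exact hi.1 (add_right_cancel h ▸ hu)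
  · have := hs (v - 1)
    rw [sub_add_cancel] at this
    rcases this with h | h | h
    · exact ⟨v - 1, h, cycleGraph_adj_iff.2 (.inr (sub_add_cancel v 1).symm)⟩
    · exact absurd h hv
    · exact ⟨v + 1, h, cycleGraph_adj_iff.2 (.inl rfl)⟩

lemma isMaxIndep_cycleGraph_iff {n : ℕ} {s : Set (Fin (n + 2))} :
    IsMaxIndep (cycleGraph (n + 2)) s ↔
      ∀ i, ¬(i ∈ s ∧ i + 1 ∈ s) ∧ (i ∈ s ∨ i + 1 ∈ s ∨ i + 1 + 1 ∈ s) := by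
  rw [isMaxIndep_iff_isIndep_and_dominating, isIndep_cycleGraph_iff, dominating_cycleGraph_iff,
    forall_and]

/-- `p = (i ∈ s, i + 1 ∈ s)` can be followed by `q = (i + 1 ∈ s, i + 2 ∈ s)` -/
def MaxIndepStep (p q : Bool × Bool) : Prop :=
  p.2 = q.1 ∧ ¬(p.1 ∧ p.2) ∧ (p.1 ∨ p.2 ∨ q.2)

instance : DecidableRel MaxIndepStep := fun _ _ => inferInstanceAs (Decidable (_ ∧ _))

lemma imax_cycleGraph_eq_card_cyclicChains (n : ℕ) :
    imax (cycleGraph (n + 2)) = #(cyclicChains MaxIndepStep (n + 1)) := by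
  classical
  rw [imax, cyclicChains, ← Set.ncard_coe_finset]
  refine Set.ncard_congr (fun s _ i => (decide (i ∈ s), decide (i + 1 ∈ s))) ?_ ?_ ?_
  · intro s hs
    simpa [MaxIndepStep] using isMaxIndep_cycleGraph_iff.1 hs
  · intro s t _ _ h
    ext i
    simpa using congrArg Prod.fst (congrFun h i)
  · intro w hw
    simp only [coe_filter, mem_univ, true_and, Set.mem_ofPred_eq] at hw
    refine ⟨{i | (w i).1}, ?_, funext fun i => ?_⟩
    · rw [Set.mem_ofPred_eq, isMaxIndep_cycleGraph_iff]
      intro i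
      simpa [(hw i).1, (hw (i + 1)).1] using (hw i).2
    · simp only [Set.mem_ofPred_eq, Bool.decide_eq_true, ← (hw i).1]

lemma transferMatrix_maxIndepStep_pow_four :
    transferMatrix MaxIndepStep ^ 4 =
      transferMatrix MaxIndepStep ^ 2 + transferMatrix MaxIndepStep := by
  decide

lemma imax_cycleGraph_eq_trace (n : ℕ) :
    imax (cycleGraph (n + 2)) = (transferMatrix MaxIndepStep ^ (n + 2)).trace :=
  (imax_cycleGraph_eq_card_cyclicChains n).trans (card_cyclicChains _ (n + 1))

theorem stmt_19 :
    imax (SimpleGraph.cycleGraph 3) = 3 ∧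
    imax (SimpleGraph.cycleGraph 4) = 2 ∧
    imax (SimpleGraph.cycleGraph 5) = 5 ∧
    ∀ n : ℕ, 6 ≤ n →
      imax (SimpleGraph.cycleGraph n) =
        imax (SimpleGraph.cycleGraph (n - 2)) + imax (SimpleGraph.cycleGraph (n - 3)) := by
  refine ⟨(imax_cycleGraph_eq_trace 1).trans (by decide),
    (imax_cycleGraph_eq_trace 2).trans (by decide),
    (imax_cycleGraph_eq_trace 3).trans (by decide), fun n hn => ?_⟩
  obtain ⟨k, rfl⟩ := Nat.exists_eq_add_of_le' hn
  rw [show k + 6 - 2 = k + 2 + 2 by omega, show k + 6 - 3 = k + 1 + 2 by omega,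
    show k + 6 = k + 4 + 2 by omega, imax_cycleGraph_eq_trace, imax_cycleGraph_eq_trace,
    imax_cycleGraph_eq_trace, ← Matrix.trace_add]
  congr 1
  rw [show k + 4 + 2 = k + 2 + 4 by omega, pow_add, transferMatrix_maxIndepStep_pow_four, mul_add,
    ← pow_add, ← pow_succ]
end
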